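/- If a classical reduction R = (G_ext, T, G_int) is β-(Â,B̂)-respectful (i.e., it is (β,Â)-extendable and (Â,B̂)-closed), then there exists an (Â,B̂)-consistent reduction R̂ = (G_ext, T̂, G_int) that is (β,Â)-effective: for every quantum adversary Â ∈ Â, the transformed adversary T̂(Â) lies in B̂ and ν_{G_ext}(T̂(Â)) ≥ β(ν_{G_int}(Â)). -/

import Mathlib

/-!
The lifted transformer sends a quantum adversary `a ∈ Â` to a witness of the closedness of
`T A`, where `A` is a classical machine with the same internal value as `a`. That witness lies
in `B̂` and has the external value of `T A`, which extendability bounds below by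
`β (νint A) = β (νint a)`.
-/

/-- The set of `(G,C)`-realizable machines: those with the same game value as some member of `C`. -/
def Realizable {Mach : Type*} (ν : Mach → ℝ) (C : Set Mach) : Set Mach :=
  {M | ∃ N ∈ C, ν M = ν N}

theorem exists_mem_ge_of_classical_equiv {Mach : Type*} {νext νint : Mach → ℝ}
    {T : Mach → Mach} {ClassicalM Ahat Bhat : Set Mach} {β : ℝ → ℝ}
    (hext : ∀ A ∈ ClassicalM ∩ Realizable νint Ahat, νext (T A) ≥ β (νint A))
    (hclosed : ∀ A ∈ ClassicalM ∩ Realizable νint Ahat, T A ∈ Realizable νext Bhat)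
    {a A : Mach} (ha : a ∈ Ahat) (hA : A ∈ ClassicalM) (hAa : νint A = νint a) :
    ∃ b ∈ Bhat, νext b ≥ β (νint a) := by
  have hArealizable : A ∈ ClassicalM ∩ Realizable νint Ahat := ⟨hA, a, ha, hAa⟩
  obtain ⟨b, hb, hTb⟩ := hclosed A hArealizable
  exact ⟨b, hb, hAa ▸ hTb ▸ hext A hArealizable⟩

/-- Quantum lifting for game-preserving reductions: a `β`-(Â,B̂)-respectful classical
reduction lifts to an (Â,B̂)-consistent, (β,Â)-effective quantum reduction. -/
theorem lifting_game_preserving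
    {Mach : Type*} (νext νint : Mach → ℝ) (T : Mach → Mach)
    (ClassicalM Ahat Bhat : Set Mach) (β : ℝ → ℝ)
    -- every quantum adversary in Â is G_int-equivalent to some classical machine
    (hrealize : ∀ a ∈ Ahat, ∃ A ∈ ClassicalM, νint A = νint a)
    -- (β,Â)-extendable: effectiveness on classical machines realizable w.r.t. Â
    (hext : ∀ A ∈ ClassicalM ∩ Realizable νint Ahat, νext (T A) ≥ β (νint A))
    -- (Â,B̂)-closed
    (hclosed : ∀ A ∈ ClassicalM ∩ Realizable νint Ahat, T A ∈ Realizable νext Bhat) :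
    ∃ That : Mach → Mach, ∀ a ∈ Ahat, That a ∈ Bhat ∧ νext (That a) ≥ β (νint a) := by
  have hlift : ∀ a ∈ Ahat, ∃ b ∈ Bhat, νext b ≥ β (νint a) := fun a ha =>
    let ⟨_, hA, hAa⟩ := hrealize a ha
    exists_mem_ge_of_classical_equiv hext hclosed ha hA hAa
  choose! That hThat using hlift
  exact ⟨That, hThat⟩
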